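/- Let (a,b) be a binary GCP of length M and let (c,d) be a binary (N,Z)-CZCP. Define length-NM binary sequences e, f by e_{mM+j} = c_m·(a_j+b_j)/2 − d_{N−1−m}·(b_j−a_j)/2 and f_{mM+j} = d_m·(a_j+b_j)/2 + c_{N−1−m}·(b_j−a_j)/2 for 0 ≤ m < N and 0 ≤ j < M. Then (e,f) is a binary (NM, ZM)-CZCP. -/

import Mathlib

/-- Aperiodic cross-correlation at shift `τ` of two length-`L` real sequences
(indexed `0, …, L-1`); it vanishes for `τ ≥ L`. -/
noncomputable def rhoR (L : ℕ) (u v : ℕ → ℝ) (τ : ℕ) : ℝ :=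
  ∑ k ∈ Finset.range (L - τ), u k * v (k + τ)

/-- A binary sequence of length `L`: all entries in `{+1, -1}`. -/
def IsBinary (L : ℕ) (u : ℕ → ℝ) : Prop := ∀ i < L, u i = 1 ∨ u i = -1

/-- `(u, v)` is a binary Golay complementary pair (GCP) of length `L`:
both are binary and the autocorrelation sums vanish for `1 ≤ τ ≤ L - 1`. -/
noncomputable def IsGCP (L : ℕ) (u v : ℕ → ℝ) : Prop :=
  IsBinary L u ∧ IsBinary L v ∧
    ∀ τ : ℕ, 1 ≤ τ → τ ≤ L - 1 → rhoR L u u τ + rhoR L v v τ = 0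

/-- `(u, v)` (length-`L` real sequences) is an `(L, Z)`-CZCP:
(C1) the autocorrelation sums vanish for `τ ∈ {1,…,Z} ∪ {L-Z,…,L-1}`, and
(C2) the cross-correlation sums vanish for `τ ∈ {L-Z,…,L-1}`. -/
noncomputable def IsCZCPR (L Z : ℕ) (u v : ℕ → ℝ) : Prop :=
  (∀ τ : ℕ, ((1 ≤ τ ∧ τ ≤ Z) ∨ (L - Z ≤ τ ∧ τ ≤ L - 1)) →
    rhoR L u u τ + rhoR L v v τ = 0) ∧
  (∀ τ : ℕ, (L - Z ≤ τ ∧ τ ≤ L - 1) → rhoR L u v τ + rhoR L v u τ = 0)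

/-!
Write `e` and `f` as sums of Kronecker products of the block sequences `c`, `rev d` (resp. `d`,
`-rev c`) with `x = (a + b) / 2`, `y = (a - b) / 2`. At a shift `s M + t` with `t < M` the
correlation of two Kronecker products splits into a term at block shift `s` and inner shift `t`
and a term at block shift `s + 1` and inner shift `M - t`. By the reversal symmetries of `ρ`,
`ρ_e + ρ_f` becomes `(ρ_c + ρ_d)(s) (ρ_x + ρ_y)(t) + (ρ_c + ρ_d)(s + 1) (ρ_x + ρ_y)(M - t)`, where
`ρ_x + ρ_y = (ρ_a + ρ_b) / 2` vanishes at every nonzero shift. The cross-correlation sum reduces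
in the same way to that of `(c, d)` at `s` and `s + 1`, provided `ρ_{c, rev c} = ρ_{d, rev d}` and
`ρ_{rev c, c} = ρ_{rev d, d}` there; for `s ≥ N - Z` this holds because in a binary CZCP
`c_k = ε d_k` and `c_{N-1-k} = -ε d_{N-1-k}` for all `k < Z`.
-/

open Finset

lemma rhoR_eq_zero_of_le {L τ : ℕ} (u v : ℕ → ℝ) (h : L ≤ τ) : rhoR L u v τ = 0 := by
  simp [rhoR, Nat.sub_eq_zero_of_le h]

lemma rhoR_congr {L : ℕ} {u u' v v' : ℕ → ℝ} (hu : ∀ k < L, u k = u' k)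
    (hv : ∀ k < L, v k = v' k) (τ : ℕ) : rhoR L u v τ = rhoR L u' v' τ :=
  sum_congr rfl fun k hk => by
    rw [mem_range] at hk
    rw [hu k (by omega), hv (k + τ) (by omega)]

lemma rhoR_add_left (L : ℕ) (u u' v : ℕ → ℝ) (τ : ℕ) :
    rhoR L (u + u') v τ = rhoR L u v τ + rhoR L u' v τ := by
  simp only [rhoR, Pi.add_apply, add_mul, sum_add_distrib]

lemma rhoR_add_right (L : ℕ) (u v v' : ℕ → ℝ) (τ : ℕ) :
    rhoR L u (v + v') τ = rhoR L u v τ + rhoR L u v' τ := by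
  simp only [rhoR, Pi.add_apply, mul_add, sum_add_distrib]

lemma rhoR_neg_left (L : ℕ) (u v : ℕ → ℝ) (τ : ℕ) : rhoR L (-u) v τ = -rhoR L u v τ := by
  simp only [rhoR, Pi.neg_apply, neg_mul, sum_neg_distrib]

lemma rhoR_neg_right (L : ℕ) (u v : ℕ → ℝ) (τ : ℕ) : rhoR L u (-v) τ = -rhoR L u v τ := by
  simp only [rhoR, Pi.neg_apply, mul_neg, sum_neg_distrib]

lemma rhoR_sub_left (L : ℕ) (u u' v : ℕ → ℝ) (τ : ℕ) :
    rhoR L (u - u') v τ = rhoR L u v τ - rhoR L u' v τ := by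
  rw [sub_eq_add_neg, rhoR_add_left, rhoR_neg_left, sub_eq_add_neg]

lemma rhoR_sub_right (L : ℕ) (u v v' : ℕ → ℝ) (τ : ℕ) :
    rhoR L u (v - v') τ = rhoR L u v τ - rhoR L u v' τ := by
  rw [sub_eq_add_neg, rhoR_add_right, rhoR_neg_right, sub_eq_add_neg]

lemma IsBinary.rhoR_self_zero {L : ℕ} {u : ℕ → ℝ} (hu : IsBinary L u) : rhoR L u u 0 = L := by
  rw [rhoR, Nat.sub_zero]
  calc ∑ k ∈ range L, u k * u (k + 0) = ∑ _k ∈ range L, (1 : ℝ) :=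
        sum_congr rfl fun k hk => by rcases hu k (mem_range.1 hk) with h | h <;> simp [h]
    _ = L := by simp

lemma IsBinary.neg {L : ℕ} {u : ℕ → ℝ} (hu : IsBinary L u) : IsBinary L (-u) := fun i hi => by
  rcases hu i hi with h | h <;> simp [h]

def seqRev (N : ℕ) (u : ℕ → ℝ) : ℕ → ℝ := fun k => u (N - 1 - k)

lemma seqRev_seqRev {N k : ℕ} (u : ℕ → ℝ) (hk : k < N) : seqRev N (seqRev N u) k = u k := by
  simp only [seqRev]; congr 1; omega

lemma IsBinary.seqRev {N : ℕ} {u : ℕ → ℝ} (hu : IsBinary N u) : IsBinary N (seqRev N u) :=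
  fun i _ => hu (N - 1 - i) (by omega)

lemma rhoR_seqRev_seqRev (N : ℕ) (u v : ℕ → ℝ) (τ : ℕ) :
    rhoR N (seqRev N u) (seqRev N v) τ = rhoR N v u τ := by
  rw [rhoR, rhoR, ← sum_range_reflect]
  refine sum_congr rfl fun k hk => ?_
  rw [mem_range] at hk
  simp only [seqRev]
  rw [mul_comm, show N - 1 - (N - τ - 1 - k + τ) = k by omega,
    show N - 1 - (N - τ - 1 - k) = k + τ by omega]

lemma rhoR_seqRev_right_comm (N : ℕ) (u v : ℕ → ℝ) (τ : ℕ) :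
    rhoR N u (seqRev N v) τ = rhoR N v (seqRev N u) τ :=
  (rhoR_congr (fun _ hk => (seqRev_seqRev u hk).symm) (fun _ _ => rfl) τ).trans
    (rhoR_seqRev_seqRev N (seqRev N u) v τ)

lemma rhoR_seqRev_left_comm (N : ℕ) (u v : ℕ → ℝ) (τ : ℕ) :
    rhoR N (seqRev N u) v τ = rhoR N (seqRev N v) u τ :=
  (rhoR_congr (fun _ _ => rfl) (fun _ hk => (seqRev_seqRev v hk).symm) τ).trans
    (rhoR_seqRev_seqRev N u (seqRev N v) τ)

def seqKron (M : ℕ) (p g : ℕ → ℝ) : ℕ → ℝ := fun i => p (i / M) * g (i % M)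

lemma seqKron_mul_add {M j : ℕ} (p g : ℕ → ℝ) (m : ℕ) (hj : j < M) :
    seqKron M p g (m * M + j) = p m * g j := by
  have hM : 0 < M := by omega
  rw [seqKron, mul_comm m M, Nat.mul_add_div hM, Nat.div_eq_of_lt hj, add_zero, Nat.mul_add_mod,
    Nat.mod_eq_of_lt hj]

lemma sum_range_mul_add {β : Type*} [AddCommMonoid β] (F : ℕ → β) (P M r : ℕ) :
    ∑ k ∈ range (P * M + r), F k
      = ∑ m ∈ range P, ∑ j ∈ range M, F (m * M + j) + ∑ j ∈ range r, F (P * M + j) := by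
  rw [sum_range_add]
  congr 1
  induction P with
  | zero => simp
  | succ P ih => rw [add_mul, one_mul, sum_range_add, ih, sum_range_succ]

/-- Blocks at distance `s` overlap with inner shift `t`, blocks at distance `s + 1` with inner
shift `M - t` and the roles of `g` and `h` exchanged. -/
lemma rhoR_seqKron {M t : ℕ} (N : ℕ) (p q g h : ℕ → ℝ) (s : ℕ) (ht : t < M) :
    rhoR (N * M) (seqKron M p g) (seqKron M q h) (s * M + t)
      = rhoR N p q s * rhoR M g h t + rhoR N p q (s + 1) * rhoR M h g (M - t) := by
  rcases le_or_gt N s with hs | hs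
  · have : N * M ≤ s * M + t := le_add_right (Nat.mul_le_mul_right M hs)
    simp only [rhoR_eq_zero_of_le _ _ hs, rhoR_eq_zero_of_le _ _ (hs.trans s.le_succ),
      rhoR_eq_zero_of_le _ _ this, zero_mul, add_zero]
  obtain ⟨P, rfl⟩ : ∃ P, N = s + 1 + P := ⟨N - 1 - s, by omega⟩
  have hlen : (s + 1 + P) * M - (s * M + t) = P * M + (M - t) := by
    have : (s + 1 + P) * M = s * M + P * M + M := by ring
    omega
  have hhead : ∀ m, ∀ j ∈ range (M - t),
      seqKron M p g (m * M + j) * seqKron M q h (m * M + j + (s * M + t))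
        = (p m * q (m + s)) * (g j * h (j + t)) := fun m j hj => by
    rw [mem_range] at hj
    rw [show m * M + j + (s * M + t) = (m + s) * M + (j + t) by ring,
      seqKron_mul_add _ _ _ (by omega), seqKron_mul_add _ _ _ (by omega)]
    ring
  have htail : ∀ m, ∀ j ∈ range t,
      seqKron M p g (m * M + (M - t + j)) * seqKron M q h (m * M + (M - t + j) + (s * M + t))
        = (p m * q (m + (s + 1))) * (h j * g (j + (M - t))) := fun m j hj => by
    rw [mem_range] at hj
    have : (m + (s + 1)) * M = m * M + s * M + M := by ring
    rw [show m * M + (M - t + j) + (s * M + t) = (m + (s + 1)) * M + j by omega,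
      seqKron_mul_add _ _ _ (by omega), seqKron_mul_add _ _ _ (hj.trans ht), add_comm j]
    ring
  have hsplit : ∀ m,
      ∑ j ∈ range M, seqKron M p g (m * M + j) * seqKron M q h (m * M + j + (s * M + t))
        = ∑ j ∈ range (M - t), (p m * q (m + s)) * (g j * h (j + t))
          + ∑ j ∈ range t, (p m * q (m + (s + 1))) * (h j * g (j + (M - t))) := fun m => by
    have := sum_range_add
      (fun j => seqKron M p g (m * M + j) * seqKron M q h (m * M + j + (s * M + t))) (M - t) t
    rw [Nat.sub_add_cancel ht.le] at this
    rw [this, sum_congr rfl (hhead m), sum_congr rfl (htail m)]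
  simp only [rhoR, hlen, sum_range_mul_add, show s + 1 + P - s = P + 1 by omega,
    show s + 1 + P - (s + 1) = P by omega, Nat.sub_sub_self ht.le]
  rw [sum_mul_sum, sum_mul_sum, sum_range_succ _ P, sum_congr rfl (hhead P)]
  simp only [hsplit, sum_add_distrib]
  ring

lemma Nat.le_of_mul_le_mul_add {a s t M : ℕ} (ht : t < M) (h : a * M ≤ s * M + t) : a ≤ s :=
  Nat.lt_succ_iff.mp <| Nat.lt_of_mul_lt_mul_right (a := M) (by rw [Nat.succ_mul]; omega)

lemma IsGCP.rhoR_add_rhoR_eq_zero {L τ : ℕ} {a b : ℕ → ℝ} (hab : IsGCP L a b) (hτ : τ ≠ 0) :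
    rhoR L a a τ + rhoR L b b τ = 0 := by
  rcases lt_or_ge τ L with h | h
  · exact hab.2.2 τ (by omega) (by omega)
  · simp [rhoR_eq_zero_of_le _ _ h]

lemma rhoR_halfSum_add_rhoR_halfDiff (L : ℕ) (a b : ℕ → ℝ) (τ : ℕ) :
    rhoR L (fun j => (a j + b j) / 2) (fun j => (a j + b j) / 2) τ
      + rhoR L (fun j => (a j - b j) / 2) (fun j => (a j - b j) / 2) τ
      = (rhoR L a a τ + rhoR L b b τ) / 2 := by
  simp only [rhoR, ← sum_add_distrib, sum_div]
  exact sum_congr rfl fun _ _ => by ring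

lemma tail_eq_zero_of_rhoR_eq_zero {N Z : ℕ} {u : ℕ → ℝ} (hZ : Z ≤ N)
    (hu : ∀ τ, N - Z ≤ τ → rhoR N u u τ = 0) (h0 : u 0 ≠ 0) :
    ∀ k < Z, u (N - 1 - k) = 0 := by
  intro k
  induction k using Nat.strong_induction_on with
  | _ k ih =>
    intro hk
    have h := hu (N - 1 - k) (by omega)
    rw [rhoR, show N - (N - 1 - k) = k + 1 by omega, sum_range_succ', sum_eq_zero, zero_add,
      zero_add] at h
    · exact (mul_eq_zero.1 h).resolve_left h0
    · intro i hi
      rw [mem_range] at hi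
      rw [show i + 1 + (N - 1 - k) = N - 1 - (k - 1 - i) by omega, ih _ (by omega) (by omega),
        mul_zero]

lemma head_eq_zero_of_rhoR_eq_zero {N Z : ℕ} {u : ℕ → ℝ} (hZ : Z ≤ N)
    (hu : ∀ τ, N - Z ≤ τ → rhoR N u u τ = 0) (hN : u (N - 1) ≠ 0) :
    ∀ k < Z, u k = 0 := by
  intro k hk
  have := tail_eq_zero_of_rhoR_eq_zero (u := seqRev N u) hZ
    (fun τ hτ => (rhoR_seqRev_seqRev N u u τ).trans (hu τ hτ)) hN k hk
  rwa [seqRev, Nat.sub_sub_self (by omega : k ≤ N - 1)] at this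

lemma tail_and_head_eq_zero_of_rhoR_eq_zero {N Z : ℕ} {u v : ℕ → ℝ} (hZ : Z ≤ N)
    (hu : ∀ τ, N - Z ≤ τ → rhoR N u u τ = 0)
    (hv : ∀ τ, N - Z ≤ τ → rhoR N v v τ = 0)
    (h0 : u 0 ≠ 0) (huv : u (N - 1) = 0 → v (N - 1) ≠ 0) :
    ∀ k < Z, u (N - 1 - k) = 0 ∧ v k = 0 := by
  have htail := tail_eq_zero_of_rhoR_eq_zero hZ hu h0
  intro k hk
  refine ⟨htail k hk, head_eq_zero_of_rhoR_eq_zero hZ hv (huv ?_) k hk⟩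
  simpa using htail 0 (by omega)

lemma IsCZCPR.rhoR_add_rhoR_eq_zero {N Z σ : ℕ} {c d : ℕ → ℝ} (hcd : IsCZCPR N Z c d)
    (hσ : N - Z ≤ σ) : rhoR N c c σ + rhoR N d d σ = 0 := by
  rcases lt_or_ge σ N with h | h
  · exact hcd.1 σ (Or.inr ⟨hσ, by omega⟩)
  · simp [rhoR_eq_zero_of_le _ _ h]

lemma IsCZCPR.rhoR_add_rhoR_swap_eq_zero {N Z σ : ℕ} {c d : ℕ → ℝ} (hcd : IsCZCPR N Z c d)
    (hσ : N - Z ≤ σ) : rhoR N c d σ + rhoR N d c σ = 0 := by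
  rcases lt_or_ge σ N with h | h
  · exact hcd.2 σ ⟨hσ, by omega⟩
  · simp [rhoR_eq_zero_of_le _ _ h]

lemma IsCZCPR.lt_of_isBinary {N Z : ℕ} {c d : ℕ → ℝ} (hcd : IsCZCPR N Z c d)
    (hc : IsBinary N c) (hd : IsBinary N d) (hN : 0 < N) : Z < N := by
  by_contra! hZN
  have := hcd.1 0 (Or.inr ⟨by omega, by omega⟩)
  rw [hc.rhoR_self_zero, hd.rhoR_self_zero] at this
  have : (0 : ℝ) < N := by exact_mod_cast hN
  linarith

/-- Both `c + d` and `c - d` have vanishing autocorrelation at the shifts `N - Z, …, N - 1`, and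
at every position exactly one of them vanishes; so one of them is zero on the last `Z` entries
and the other on the first `Z`. -/
lemma IsCZCPR.exists_sign {N Z : ℕ} {c d : ℕ → ℝ} (hcd : IsCZCPR N Z c d)
    (hc : IsBinary N c) (hd : IsBinary N d) (hZN : Z < N) :
    ∃ ε : ℝ, ε * ε = 1 ∧ (∀ k < Z, c k = ε * d k) ∧
      ∀ k < Z, seqRev N c k = -ε * seqRev N d k := by
  have hadd : ∀ τ, N - Z ≤ τ → rhoR N (c + d) (c + d) τ = 0 := fun τ hτ => by
    rw [rhoR_add_left, rhoR_add_right, rhoR_add_right]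
    linarith [hcd.rhoR_add_rhoR_eq_zero hτ, hcd.rhoR_add_rhoR_swap_eq_zero hτ]
  have hsub : ∀ τ, N - Z ≤ τ → rhoR N (c - d) (c - d) τ = 0 := fun τ hτ => by
    rw [rhoR_sub_left, rhoR_sub_right, rhoR_sub_right]
    linarith [hcd.rhoR_add_rhoR_eq_zero hτ, hcd.rhoR_add_rhoR_swap_eq_zero hτ]
  have hc0 := hc 0 (by omega)
  have hcN := hc (N - 1) (by omega)
  have hdN := hd (N - 1) (by omega)
  by_cases h0 : c 0 = d 0
  · have key := tail_and_head_eq_zero_of_rhoR_eq_zero hZN.le hadd hsub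
      (by rcases hc0 with h | h <;> norm_num [← h0, h])
      (by rcases hcN with h | h <;> rcases hdN with h' | h' <;> norm_num [h, h'])
    refine ⟨1, one_mul 1, fun k hk => ?_, fun k hk => ?_⟩
    · have := (key k hk).2
      simp only [Pi.sub_apply, sub_eq_zero] at this
      linarith
    · have := (key k hk).1
      simp only [Pi.add_apply, add_eq_zero_iff_eq_neg] at this
      simp only [seqRev, this]; ring
  · have key := tail_and_head_eq_zero_of_rhoR_eq_zero hZN.le hsub hadd
      (sub_ne_zero.mpr h0)
      (by rcases hcN with h | h <;> rcases hdN with h' | h' <;> norm_num [h, h'])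
    refine ⟨-1, by norm_num, fun k hk => ?_, fun k hk => ?_⟩
    · have := (key k hk).2
      simp only [Pi.add_apply, add_eq_zero_iff_eq_neg] at this
      linarith
    · have := (key k hk).1
      simp only [Pi.sub_apply, sub_eq_zero] at this
      simp only [seqRev, this]; ring

lemma rhoR_seqRev_eq_of_eq_mul {N Z σ : ℕ} {u v : ℕ → ℝ} {ε : ℝ} (hε : ε * ε = 1)
    (h : ∀ k < Z, u k = ε * v k) (hσ : N - Z ≤ σ) :
    rhoR N u (seqRev N u) σ = rhoR N v (seqRev N v) σ :=
  sum_congr rfl fun m hm => by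
    rw [mem_range] at hm
    simp only [seqRev]
    rw [h m (by omega), h _ (by omega)]
    linear_combination (v m * v (N - 1 - (m + σ))) * hε

lemma IsCZCPR.rhoR_seqRev_eq {N Z : ℕ} {c d : ℕ → ℝ} (hcd : IsCZCPR N Z c d)
    (hc : IsBinary N c) (hd : IsBinary N d) (hZN : Z < N) {σ : ℕ} (hσ : N - Z ≤ σ) :
    rhoR N c (seqRev N c) σ = rhoR N d (seqRev N d) σ ∧
      rhoR N (seqRev N c) c σ = rhoR N (seqRev N d) d σ := by
  obtain ⟨ε, hε, hfront, hback⟩ := hcd.exists_sign hc hd hZN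
  refine ⟨rhoR_seqRev_eq_of_eq_mul hε hfront hσ, ?_⟩
  have := rhoR_seqRev_eq_of_eq_mul (by linear_combination hε) hback hσ
  rwa [rhoR_congr (fun _ _ => rfl) (fun _ hk => seqRev_seqRev c hk),
    rhoR_congr (fun _ _ => rfl) (fun _ hk => seqRev_seqRev d hk)] at this

lemma isBinary_seqKron_add {N M : ℕ} {p q a b : ℕ → ℝ} (hp : IsBinary N p) (hq : IsBinary N q)
    (ha : IsBinary M a) (hb : IsBinary M b) :
    IsBinary (N * M) (seqKron M p (fun j => (a j + b j) / 2)
      + seqKron M q (fun j => (a j - b j) / 2)) := by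
  intro i hi
  have hM : 0 < M := Nat.pos_of_ne_zero (by rintro rfl; simp at hi)
  have hm : i / M < N := (Nat.div_lt_iff_lt_mul hM).2 hi
  have hj : i % M < M := Nat.mod_lt i hM
  simp only [Pi.add_apply, seqKron]
  rcases hp _ hm with h₁ | h₁ <;> rcases hq _ hm with h₂ | h₂ <;> rcases ha _ hj with h₃ | h₃ <;>
    rcases hb _ hj with h₄ | h₄ <;> norm_num [h₁, h₂, h₃, h₄]

section Turyn

/-- With `x = (a + b) / 2` and `y = (a - b) / 2` this is the pair `Turyn((a, b), (c, d))`. -/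
def turynFst (N M : ℕ) (c d x y : ℕ → ℝ) : ℕ → ℝ := seqKron M c x + seqKron M (seqRev N d) y

def turynSnd (N M : ℕ) (c d x y : ℕ → ℝ) : ℕ → ℝ := seqKron M d x + seqKron M (-seqRev N c) y

variable {M N Z : ℕ} {c d x y : ℕ → ℝ}

lemma rhoR_turynFst_add_rhoR_turynSnd {s t : ℕ} (ht : t < M) :
    rhoR (N * M) (turynFst N M c d x y) (turynFst N M c d x y) (s * M + t)
      + rhoR (N * M) (turynSnd N M c d x y) (turynSnd N M c d x y) (s * M + t)
      = (rhoR N c c s + rhoR N d d s) * (rhoR M x x t + rhoR M y y t)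
        + (rhoR N c c (s + 1) + rhoR N d d (s + 1))
          * (rhoR M x x (M - t) + rhoR M y y (M - t)) := by
  simp only [turynFst, turynSnd, rhoR_add_left, rhoR_add_right, rhoR_seqKron _ _ _ _ _ _ ht,
    rhoR_neg_left, rhoR_neg_right, rhoR_seqRev_seqRev, rhoR_seqRev_right_comm N d c,
    rhoR_seqRev_left_comm N c d]
  ring

lemma rhoR_turyn_cross {s t : ℕ} (ht : t < M)
    (hrev : ∀ σ, s ≤ σ → rhoR N c (seqRev N c) σ = rhoR N d (seqRev N d) σ ∧
      rhoR N (seqRev N c) c σ = rhoR N (seqRev N d) d σ) :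
    rhoR (N * M) (turynFst N M c d x y) (turynSnd N M c d x y) (s * M + t)
      + rhoR (N * M) (turynSnd N M c d x y) (turynFst N M c d x y) (s * M + t)
      = (rhoR N c d s + rhoR N d c s) * (rhoR M x x t - rhoR M y y t)
        + (rhoR N c d (s + 1) + rhoR N d c (s + 1))
          * (rhoR M x x (M - t) - rhoR M y y (M - t)) := by
  simp only [turynFst, turynSnd, rhoR_add_left, rhoR_add_right, rhoR_seqKron _ _ _ _ _ _ ht,
    rhoR_neg_left, rhoR_neg_right, rhoR_seqRev_seqRev, (hrev s le_rfl).1, (hrev s le_rfl).2,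
    (hrev (s + 1) s.le_succ).1, (hrev (s + 1) s.le_succ).2]
  ring

lemma isCZCPR_turyn (hM : 0 < M) (hcd : IsCZCPR N Z c d)
    (hxy : ∀ t ≠ 0, rhoR M x x t + rhoR M y y t = 0)
    (hrev : ∀ σ, N - Z ≤ σ → rhoR N c (seqRev N c) σ = rhoR N d (seqRev N d) σ ∧
      rhoR N (seqRev N c) c σ = rhoR N (seqRev N d) d σ) :
    IsCZCPR (N * M) (Z * M) (turynFst N M c d x y) (turynSnd N M c d x y) := by
  constructor <;> intro τ hτ <;>
  obtain ⟨s, t, ht, rfl⟩ : ∃ s t, t < M ∧ τ = s * M + t :=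
    ⟨τ / M, τ % M, Nat.mod_lt τ hM, (Nat.div_add_mod' τ M).symm⟩
  · rw [rhoR_turynFst_add_rhoR_turynSnd ht, hxy (M - t) (by omega), mul_zero, add_zero]
    rcases eq_or_ne t 0 with rfl | ht0
    · rcases hτ with ⟨h₁, h₂⟩ | ⟨h₁, -⟩
      · rw [hcd.1 s (Or.inl ⟨Nat.pos_of_ne_zero (by rintro rfl; simp at h₁),
          Nat.le_of_mul_le_mul_right h₂ hM⟩), zero_mul]
      · rw [← Nat.sub_mul] at h₁
        rw [hcd.rhoR_add_rhoR_eq_zero (Nat.le_of_mul_le_mul_add hM h₁), zero_mul]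
    · rw [hxy t ht0, mul_zero]
  · rw [← Nat.sub_mul] at hτ
    have hs := Nat.le_of_mul_le_mul_add ht hτ.1
    rw [rhoR_turyn_cross ht fun σ hσ => hrev σ (hs.trans hσ),
      hcd.rhoR_add_rhoR_swap_eq_zero hs, hcd.rhoR_add_rhoR_swap_eq_zero (hs.trans s.le_succ)]
    ring

end Turyn

/-- Theorem 8 of the paper: If `(a, b)` is a binary GCP of length `M` and
`(c, d)` a binary `(N, Z)`-CZCP, then the Turyn product sequences `e, f` of length `N·M`,
given at index `mM + j` (`m = i / M`, `j = i % M`) by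
`e_{mM+j} = c_m (a_j + b_j)/2 - d_{N-1-m} (b_j - a_j)/2` and
`f_{mM+j} = d_m (a_j + b_j)/2 + c_{N-1-m} (b_j - a_j)/2`,
form a binary `(NM, ZM)`-CZCP. -/
theorem stmt_15 (M N Z : ℕ) (hM : 0 < M) (hN : 0 < N)
    (a b : ℕ → ℝ) (hab : IsGCP M a b)
    (c d : ℕ → ℝ) (hc : IsBinary N c) (hd : IsBinary N d) (hcd : IsCZCPR N Z c d)
    (e f : ℕ → ℝ)
    (he : ∀ i, e i = c (i / M) * (a (i % M) + b (i % M)) / 2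
      - d (N - 1 - i / M) * (b (i % M) - a (i % M)) / 2)
    (hf : ∀ i, f i = d (i / M) * (a (i % M) + b (i % M)) / 2
      + c (N - 1 - i / M) * (b (i % M) - a (i % M)) / 2) :
    IsBinary (N * M) e ∧ IsBinary (N * M) f ∧ IsCZCPR (N * M) (Z * M) e f := by
  set x : ℕ → ℝ := fun j => (a j + b j) / 2
  set y : ℕ → ℝ := fun j => (a j - b j) / 2
  obtain rfl : e = turynFst N M c d x y := funext fun i => by
    rw [he]; simp only [turynFst, Pi.add_apply, seqKron, seqRev, x, y]; ring
  obtain rfl : f = turynSnd N M c d x y := funext fun i => by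
    rw [hf]; simp only [turynSnd, Pi.add_apply, Pi.neg_apply, seqKron, seqRev, x, y]; ring
  have hxy : ∀ t ≠ 0, rhoR M x x t + rhoR M y y t = 0 := fun t ht => by
    rw [rhoR_halfSum_add_rhoR_halfDiff, hab.rhoR_add_rhoR_eq_zero ht, zero_div]
  have hZN := hcd.lt_of_isBinary hc hd hN
  exact ⟨isBinary_seqKron_add hc hd.seqRev hab.1 hab.2.1,
    isBinary_seqKron_add hd hc.seqRev.neg hab.1 hab.2.1,
    isCZCPR_turyn hM hcd hxy fun σ hσ => hcd.rhoR_seqRev_eq hc hd hZN hσ⟩
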